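/- In the BP encoding of a binary tree with sentinel enclosing parentheses, node u is an ancestor of node v (with ancestors including the node itself) if and only if open(u) ≤ v < enclose_close(u), where nodes are identified with the indices of their closing parentheses. -/

import Mathlib

/-- A binary tree: `leaf` is the empty tree; each internal node has an
optional left and an optional right subtree (possibly `leaf`). -/
inductive BinTree : Type where
  | leaf : BinTree
  | node : BinTree → BinTree → BinTree
deriving DecidableEq

namespace BinTree

/-- Number of nodes of a binary tree. -/
def size : BinTree → ℕ
  | leaf => 0
  | node l r => l.size + r.size + 1

/-- BalancedBP-parenthesis encoding of binary trees:
`BP(empty) = ε`, `BP(t) = '(' ++ BP(t_l) ++ ')' ++ BP(t_r)`.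
`true` is an opening parenthesis, `false` a closing one. -/
def bp : BinTree → List Bool
  | leaf => []
  | node l r => true :: (l.bp ++ false :: r.bp)

/-- The subtree reached by following a path (`false` = left, `true` = right). -/
def subtreeAt : BinTree → List Bool → Option BinTree
  | t, [] => some t
  | leaf, _ :: _ => none
  | node l _, false :: p => subtreeAt l p
  | node _ r, true :: p => subtreeAt r p

/-- A path identifies an actual node of the tree (not an empty slot). -/
def ValidPath (t : BinTree) (p : List Bool) : Prop :=
  ∃ l r, subtreeAt t p = some (node l r)

/-- Index (0-based) of the opening parenthesis of the node at a path. -/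
def openIdx : BinTree → List Bool → Option ℕ
  | leaf, _ => none
  | node _ _, [] => some 0
  | node l _, false :: p => (openIdx l p).map (· + 1)
  | node l r, true :: p => (openIdx r p).map (· + (l.bp.length + 2))

/-- Index (0-based) of the closing parenthesis of the node at a path. -/
def closeIdx : BinTree → List Bool → Option ℕ
  | leaf, _ => none
  | node l _, [] => some (l.bp.length + 1)
  | node l _, false :: p => (closeIdx l p).map (· + 1)
  | node l r, true :: p => (closeIdx r p).map (· + (l.bp.length + 2))

/-- Inorder rank (0-based) of the node at a path. -/
def inorderIdx : BinTree → List Bool → Option ℕ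
  | leaf, _ => none
  | node l _, [] => some l.size
  | node l _, false :: p => inorderIdx l p
  | node l r, true :: p => (inorderIdx r p).map (· + (l.size + 1))

end BinTree

/-- A sequence of parentheses (`true` = '(') is balanced: equally many opening
and closing parentheses, and every prefix has at least as many opening ones. -/
def BalancedBP (s : List Bool) : Prop :=
  s.count true = s.count false ∧
  ∀ k, (s.take k).count false ≤ (s.take k).count true

/-- `excess s k`: number of opening minus closing parentheses among the first `k` symbols. -/
def excess (s : List Bool) (k : ℕ) : ℤ :=
  ((s.take k).count true : ℤ) - ((s.take k).count false : ℤ)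

/-- `IsMatch s i j`: positions `i < j` form a matching pair of parentheses
(the standard stack-based matching). -/
def IsMatch (s : List Bool) (i j : ℕ) : Prop :=
  i < j ∧ j < s.length ∧ s[i]? = some true ∧ s[j]? = some false ∧
  excess s (j + 1) = excess s i ∧
  ∀ k, i < k → k ≤ j → excess s i < excess s k

/-- `EnclosePair s i v j`: `j` is the closing parenthesis whose matching pair
tightly encloses the matching pair `(i, v)`. -/
def EnclosePair (s : List Bool) (i v j : ℕ) : Prop :=
  (∃ i', IsMatch s i' j ∧ i' < i ∧ v < j) ∧
  ∀ i'' j'', IsMatch s i'' j'' → i'' < i → v < j'' → j ≤ j''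

/-- Longest common prefix of two paths. -/
def lcp : List Bool → List Bool → List Bool
  | a :: as, b :: bs => if a = b then a :: lcp as bs else []
  | _, _ => []

/-!
The node `u` at path `p` spans the contiguous block `[open u, open u + |BP(u)|)` of the
encoding, and the closing parentheses inside this block are exactly those of the descendants
of `u`. The excess never drops inside the block below its level at `open u`, so a pair that
opens before `u` and closes inside the block would have to close below that level: the
enclosing pair closes at or after the block's end. Conversely, unless the block ends the
encoding, the parenthesis right after it is a `)` whose mate precedes `open u`. Hence
`encloseClose u = open u + |BP(u)|`.
-/

open BinTree

lemma excess_zero (s : List Bool) : excess s 0 = 0 := by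
  simp [excess]

lemma excess_cons_true (s : List Bool) (k : ℕ) :
    excess (true :: s) (k + 1) = excess s k + 1 := by
  simp [excess]; ring

lemma excess_cons_false (s : List Bool) (k : ℕ) :
    excess (false :: s) (k + 1) = excess s k - 1 := by
  simp [excess]; ring

lemma excess_append_of_le_length {A : List Bool} (B : List Bool) {k : ℕ} (h : k ≤ A.length) :
    excess (A ++ B) k = excess A k := by
  rw [excess, excess, List.take_append_of_le_length h]

lemma excess_append_length_add (A B : List Bool) (k : ℕ) :
    excess (A ++ B) (A.length + k) = excess A A.length + excess B k := by
  simp only [excess, List.take_append, Nat.add_sub_cancel_left, List.take_length,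
    List.take_of_length_le (Nat.le_add_right _ _), List.count_append]
  push_cast; ring

lemma excess_infix (A C B : List Bool) {m : ℕ} (hm : m ≤ C.length) :
    excess (A ++ C ++ B) (A.length + m) = excess A A.length + excess C m := by
  rw [List.append_assoc, excess_append_length_add, excess_append_of_le_length _ hm]

lemma getElem?_infix (A C B : List Bool) {i : ℕ} (hi : i < C.length) :
    (A ++ C ++ B)[A.length + i]? = C[i]? := by
  rw [List.append_assoc, List.getElem?_append_right (by omega), Nat.add_sub_cancel_left,
    List.getElem?_append_left hi]

lemma IsMatch.infix {C : List Bool} {i j : ℕ} (A B : List Bool) (h : IsMatch C i j) :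
    IsMatch (A ++ C ++ B) (A.length + i) (A.length + j) := by
  obtain ⟨hij, hj, hi_open, hj_close, hexc, hbetween⟩ := h
  refine ⟨by omega, by simp; omega, by rwa [getElem?_infix _ _ _ (by omega)],
    by rwa [getElem?_infix _ _ _ hj], ?_, fun k hik hkj => ?_⟩
  · rw [Nat.add_assoc, excess_infix _ _ _ hj, excess_infix _ _ _ (by omega), hexc]
  · obtain ⟨m, rfl⟩ : ∃ m, k = A.length + m := ⟨k - A.length, by omega⟩
    rw [excess_infix _ _ _ (by omega), excess_infix _ _ _ (by omega)]
    have := hbetween m (by omega) (by omega)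
    omega

lemma IsMatch.add_length_le {A C B : List Bool} {i j : ℕ} (hC : ∀ m, 0 ≤ excess C m)
    (h : IsMatch (A ++ C ++ B) i j) (hi : i < A.length) (hj : A.length ≤ j) :
    A.length + C.length ≤ j := by
  obtain ⟨-, -, -, -, hexc, hbetween⟩ := h
  by_contra! hlt
  have hstart := hbetween A.length hi hj
  rw [← Nat.add_zero A.length, excess_infix _ _ _ (Nat.zero_le _), excess_zero] at hstart
  obtain ⟨m, hm⟩ : ∃ m, j + 1 = A.length + m := ⟨j + 1 - A.length, by omega⟩
  rw [hm, excess_infix _ _ _ (by omega)] at hexc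
  have := hC m
  omega

namespace BinTree

lemma length_bp_node (l r : BinTree) :
    (node l r).bp.length = l.bp.length + r.bp.length + 2 := by
  simp [bp]; omega

lemma count_true_bp_eq_count_false (t : BinTree) : t.bp.count true = t.bp.count false := by
  induction t with
  | leaf => rfl
  | node l r ihl ihr => simp [bp, ihl, ihr]; omega

lemma excess_bp_length (t : BinTree) : excess t.bp t.bp.length = 0 := by
  simp [excess, count_true_bp_eq_count_false]

lemma excess_bp_node_of_le {l : BinTree} (r : BinTree) {k : ℕ} (hk : k ≤ l.bp.length) :
    excess (node l r).bp (k + 1) = excess l.bp k + 1 := by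
  rw [bp, excess_cons_true, excess_append_of_le_length _ hk]

lemma excess_bp_node_add (l r : BinTree) (k : ℕ) :
    excess (node l r).bp (l.bp.length + 2 + k) = excess r.bp k := by
  rw [bp, show l.bp.length + 2 + k = l.bp.length + (k + 1) + 1 by omega, excess_cons_true,
    excess_append_length_add, excess_bp_length, excess_cons_false]
  ring

lemma excess_bp_nonneg (t : BinTree) (k : ℕ) : 0 ≤ excess t.bp k := by
  induction t generalizing k with
  | leaf => simp [bp, excess]
  | node l r ihl ihr =>
    rcases k with _ | k
    · simp [excess_zero]
    rcases le_or_gt k l.bp.length with hk | hk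
    · rw [excess_bp_node_of_le r hk]
      have := ihl k
      omega
    · obtain ⟨m, hm⟩ : ∃ m, k + 1 = l.bp.length + 2 + m :=
        ⟨k - l.bp.length - 1, by omega⟩
      rw [hm, excess_bp_node_add]
      exact ihr m

lemma isMatch_bp_node (l r : BinTree) : IsMatch (node l r).bp 0 (l.bp.length + 1) := by
  refine ⟨by omega, by rw [length_bp_node]; omega, rfl, ?_, ?_, fun k hk hkl => ?_⟩
  · simp [bp]
  · rw [show l.bp.length + 1 + 1 = l.bp.length + 2 + 0 from rfl, excess_bp_node_add, excess_zero,
      excess_zero]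
  · obtain ⟨m, rfl⟩ : ∃ m, k = m + 1 := ⟨k - 1, by omega⟩
    rw [excess_zero, excess_bp_node_of_le r (by omega)]
    have := excess_bp_nonneg l m
    omega

section Positions

variable {t u : BinTree} {p : List Bool} {o : ℕ}

lemma exists_subtreeAt_of_openIdx (h : openIdx t p = some o) : ∃ u, subtreeAt t p = some u := by
  induction p generalizing t o with
  | nil => exact ⟨t, by cases t <;> rfl⟩
  | cons b p ih =>
    cases t with
    | leaf => simp [openIdx] at h
    | node l r =>
      cases b <;> simp only [openIdx, Option.map_eq_some_iff] at h <;> obtain ⟨o', ho', -⟩ := h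
      exacts [ih ho', ih ho']

lemma closeIdx_lt_length {c : ℕ} (h : closeIdx t p = some c) : c < t.bp.length := by
  induction p generalizing t c with
  | nil =>
    cases t with
    | leaf => simp [closeIdx] at h
    | node l r => simp only [closeIdx, Option.some.injEq] at h; rw [length_bp_node]; omega
  | cons b p ih =>
    cases t with
    | leaf => simp [closeIdx] at h
    | node l r =>
      cases b <;> simp only [closeIdx, Option.map_eq_some_iff] at h <;>
        obtain ⟨c', hc', rfl⟩ := h <;> have := ih hc' <;> rw [length_bp_node] <;> omega

lemma exists_bp_eq_append (h1 : subtreeAt t p = some u) (h2 : openIdx t p = some o) :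
    ∃ A B : List Bool, t.bp = A ++ u.bp ++ B ∧ A.length = o := by
  induction p generalizing t o with
  | nil =>
    cases t with
    | leaf => simp [openIdx] at h2
    | node l r =>
      simp only [subtreeAt, Option.some.injEq, openIdx] at h1 h2
      subst h1 h2
      exact ⟨[], [], by simp, rfl⟩
  | cons b p ih =>
    cases t with
    | leaf => simp [openIdx] at h2
    | node l r =>
      cases b <;> simp only [subtreeAt, openIdx, Option.map_eq_some_iff] at h1 h2 <;>
        obtain ⟨o', ho', rfl⟩ := h2 <;> obtain ⟨A, B, hAB, rfl⟩ := ih h1 ho'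
      · exact ⟨true :: A, B ++ false :: r.bp, by simp [bp, hAB], by simp⟩
      · exact ⟨true :: l.bp ++ false :: A, B, by simp [bp, hAB], by simp; omega⟩

lemma openIdx_add_length_le (h1 : subtreeAt t p = some u) (h2 : openIdx t p = some o) :
    o + u.bp.length ≤ t.bp.length := by
  obtain ⟨A, B, hAB, rfl⟩ := exists_bp_eq_append h1 h2
  simp [hAB]

lemma isPrefix_iff_closeIdx_mem {q : List Bool} {c : ℕ} (h1 : subtreeAt t p = some u)
    (h2 : openIdx t p = some o) (h3 : closeIdx t q = some c) :
    p <+: q ↔ o ≤ c ∧ c < o + u.bp.length := by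
  induction p generalizing t o q c with
  | nil =>
    cases t with
    | leaf => simp [openIdx] at h2
    | node l r =>
      simp only [subtreeAt, Option.some.injEq, openIdx] at h1 h2
      subst h1 h2
      simpa using closeIdx_lt_length h3
  | cons b p ih =>
    cases t with
    | leaf => simp [openIdx] at h2
    | node l r =>
      cases b <;> simp only [subtreeAt, openIdx, Option.map_eq_some_iff] at h1 h2 <;>
        obtain ⟨o', ho', rfl⟩ := h2 <;> have hspan := openIdx_add_length_le h1 ho' <;>
        rcases q with _ | ⟨_ | _, q⟩ <;>
        simp only [closeIdx, Option.some.injEq, Option.map_eq_some_iff] at h3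
      -- If `q` is empty or turns the other way at the root, `c` lies outside the block.
      all_goals first
        | simp only [List.prefix_nil, reduceCtorEq, false_iff]; omega
        | obtain ⟨c', hc', rfl⟩ := h3
          have := closeIdx_lt_length hc'
          first
            | simp only [List.cons_prefix_cons, true_and, ih h1 ho' hc']; omega
            | simp only [List.cons_prefix_cons, reduceCtorEq, false_and, false_iff]; omega

lemma exists_isMatch_of_lt_length (h1 : subtreeAt t p = some u) (h2 : openIdx t p = some o)
    (h : o + u.bp.length < t.bp.length) : ∃ i < o, IsMatch t.bp i (o + u.bp.length) := by
  induction p generalizing t o with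
  | nil =>
    cases t with
    | leaf => simp [openIdx] at h2
    | node l r =>
      simp only [subtreeAt, Option.some.injEq, openIdx] at h1 h2
      subst h1 h2
      omega
  | cons b p ih =>
    cases t with
    | leaf => simp [openIdx] at h2
    | node l r =>
      rw [length_bp_node] at h
      cases b <;> simp only [subtreeAt, openIdx, Option.map_eq_some_iff] at h1 h2 <;>
        obtain ⟨o', ho', rfl⟩ := h2
      · rcases (openIdx_add_length_le h1 ho').lt_or_eq with hlt | heq
        · obtain ⟨i, hi, hm⟩ := ih h1 ho' hlt
          refine ⟨1 + i, by omega, ?_⟩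
          rw [show (node l r).bp = [true] ++ l.bp ++ false :: r.bp from rfl,
            show o' + 1 + u.bp.length = 1 + (o' + u.bp.length) by omega]
          exact hm.infix [true] (false :: r.bp)
        · refine ⟨0, by omega, ?_⟩
          convert isMatch_bp_node l r using 1
          omega
      · obtain ⟨i, hi, hm⟩ := ih h1 ho' (by omega)
        refine ⟨l.bp.length + 2 + i, by omega, ?_⟩
        have hbp : (node l r).bp = (true :: l.bp ++ [false]) ++ r.bp ++ [] := by simp [bp]
        rw [hbp, show o' + (l.bp.length + 2) + u.bp.length = l.bp.length + 2 + (o' + u.bp.length)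
          by omega]
        simpa using hm.infix (true :: l.bp ++ [false]) []

end Positions

end BinTree

/-- with sentinel enclosing parentheses, `u` is an ancestor of
`v` (ancestors include the node itself) iff `open u ≤ v < encloseClose u`,
nodes being identified with their closing-parenthesis indices. -/
theorem isAncestor_iff (t : BinTree) (pu pv : List Bool) (ou cu cv j : ℕ)
    (hou : BinTree.openIdx (.node t .leaf) pu = some ou)
    (hcu : BinTree.closeIdx (.node t .leaf) pu = some cu)
    (hcv : BinTree.closeIdx (.node t .leaf) pv = some cv)
    (hj : EnclosePair (BinTree.node t .leaf).bp ou cu j) :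
    pu <+: pv ↔ (ou ≤ cv ∧ cv < j) := by
  obtain ⟨u, hsub⟩ := exists_subtreeAt_of_openIdx hou
  obtain ⟨A, B, hbp, rfl⟩ := exists_bp_eq_append hsub hou
  have hcu_mem := (isPrefix_iff_closeIdx_mem hsub hou hcu).mp (List.prefix_refl pu)
  obtain ⟨⟨i, hmatch, hi, hcuj⟩, htight⟩ := hj
  have hj_lt : j < (node t leaf).bp.length := hmatch.2.1
  have hj_ge : A.length + u.bp.length ≤ j := by
    rw [hbp] at hmatch
    exact hmatch.add_length_le (excess_bp_nonneg u) hi (by omega)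
  have hj_le : j ≤ A.length + u.bp.length := by
    obtain ⟨i', hi', hmatch'⟩ := exists_isMatch_of_lt_length hsub hou (by omega)
    exact htight i' _ hmatch' hi' (by omega)
  rw [isPrefix_iff_closeIdx_mem hsub hou hcv, le_antisymm hj_le hj_ge]
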